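/- For every integer n ≥ 2, Cov(n, 1) = 2^{−n}·binom(n−2, ⌊(n−1)/2⌋). Moreover, there exists a constant C > 0 such that for all integers n ≥ 3, | Cov(n, 1) − √(1/(8π(n−2))) | ≤ C·n^{−3/2}. -/

import Mathlib

open Real

/-- Binomial coefficient with an integer lower index, with the convention that it
vanishes for negative lower index (and, via `Nat.choose`, above the upper index). -/
def ibinom (a : ℕ) (b : ℤ) : ℕ := if 0 ≤ b then a.choose b.toNat else 0

/-- The fold covariance of k-fold cross-validation of the Majority algorithm on `n`
i.i.d. uniformly random binary labels with fold size `m = n/k`: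
`Cov(n, m) = 2^{-n} · Σ_{j=0}^{m-1} binom(m-1, j)² · binom(n-2m, ⌊(n-m)/2⌋ - j)`. -/
noncomputable def Cov (n m : ℕ) : ℝ :=
  (2 : ℝ)⁻¹ ^ n * ∑ j ∈ Finset.range m,
    ((m - 1).choose j : ℝ) ^ 2 * (ibinom (n - 2 * m) (((n : ℤ) - m) / 2 - j) : ℝ)

/-!
For `m = 1` only the term `j = 0` survives, and with `K = ⌊(n-1)/2⌋` the value
`2^{-n} binom(n-2, K)` is `c_K / 4`, where `c_K = binom(2K, K) / 4^K` (for odd `n` use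
`2 binom(2K-1, K) = binom(2K, K)`). Wallis' product gives `1/(π(K+1/2)) ≤ c_K² ≤ 1/(πK)`, so for
`t = (n-2)/2 ∈ [K - 1/2, K]` the square `c_K²` lies within `1/(πt²)` of `1/(πt)`; the inequality
`|a - √x| ≤ |a² - x| / √x` turns this into `|c_K - √(1/(πt))| ≤ t^{-3/2}`, and `t ≥ n/6`.
-/

open Nat Real.Wallis

noncomputable def normCentralBinom (k : ℕ) : ℝ := centralBinom k / 4 ^ k

lemma normCentralBinom_pos (k : ℕ) : 0 < normCentralBinom k := by
  have := centralBinom_pos k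
  unfold normCentralBinom
  positivity

lemma normCentralBinom_sq_mul_W (k : ℕ) :
    normCentralBinom k ^ 2 * ((2 * k + 1) * W k) = 1 := by
  have hchoose : (centralBinom k : ℝ) * k ! * k ! = (2 * k)! := by
    have := choose_mul_factorial_mul_factorial (show k ≤ 2 * k by omega)
    rw [show 2 * k - k = k by omega, ← centralBinom_eq_two_mul_choose] at this
    exact_mod_cast this
  rw [normCentralBinom, W_eq_factorial_ratio, ← hchoose, pow_mul]
  have := factorial_pos k
  have := centralBinom_pos k
  field_simp
  rw [show (2 : ℝ) ^ 4 = 4 ^ 2 by norm_num, ← pow_mul, ← pow_mul, mul_comm]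

lemma one_div_pi_mul_le_normCentralBinom_sq (k : ℕ) :
    1 / (π * (k + 1 / 2)) ≤ normCentralBinom k ^ 2 := by
  have hW := W_le k
  have hW0 := W_pos k
  have h := normCentralBinom_sq_mul_W k
  rw [div_le_iff₀ (by positivity)]
  nlinarith [pi_pos]

lemma normCentralBinom_sq_le_one_div_pi_mul {k : ℕ} (hk : 0 < k) :
    normCentralBinom k ^ 2 ≤ 1 / (π * k) := by
  have hW : (2 * k + 1) * π ≤ 4 * (k + 1) * W k := by
    have := le_W k
    rw [div_mul_eq_mul_div, div_le_iff₀ (by positivity)] at this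
    linarith
  have h := normCentralBinom_sq_mul_W k
  have hc := pow_pos (normCentralBinom_pos k) 2
  have hcW := mul_pos hc (W_pos k)
  rw [le_div_iff₀ (by positivity)]
  refine le_of_mul_le_mul_right ?_ (by positivity : (0 : ℝ) < 2 * k + 1)
  nlinarith [mul_le_mul_of_nonneg_left hW (by positivity : (0 : ℝ) ≤ normCentralBinom k ^ 2 * k)]

lemma abs_sub_sqrt_le {a x : ℝ} (ha : 0 ≤ a) (hx : 0 < x) : |a - √x| ≤ |a ^ 2 - x| / √x := by
  have hs : 0 < √x := sqrt_pos.2 hx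
  rw [le_div_iff₀ hs]
  calc |a - √x| * √x ≤ |a - √x| * (a + √x) := by gcongr; linarith
    _ = |a ^ 2 - x| := by
      rw [← abs_of_nonneg (a := a + √x) (by positivity), ← abs_mul]
      congr 1
      linear_combination -(sq_sqrt hx.le)

lemma rpow_neg_three_div_two {t : ℝ} (ht : 0 ≤ t) : t ^ (-(3 : ℝ) / 2) = (t * √t)⁻¹ := by
  rw [neg_div, rpow_neg ht, show (3 : ℝ) / 2 = 1 + 1 / 2 by norm_num, rpow_add' ht (by norm_num),
    rpow_one, sqrt_eq_rpow]

lemma abs_normCentralBinom_sub_sqrt_le {K : ℕ} {t : ℝ} (ht : 0 < t) (htK : t ≤ K)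
    (hKt : K ≤ t + 1 / 2) :
    |normCentralBinom K - √(1 / (π * t))| ≤ t ^ (-(3 : ℝ) / 2) := by
  have hπ := pi_pos
  have hK : 0 < K := by exact_mod_cast ht.trans_le htK
  have hupper : normCentralBinom K ^ 2 ≤ 1 / (π * t) :=
    (normCentralBinom_sq_le_one_div_pi_mul hK).trans
      (one_div_le_one_div_of_le (by positivity) (show π * t ≤ π * K by gcongr))
  have hlower : 1 / (π * (t + 1)) ≤ normCentralBinom K ^ 2 :=
    (one_div_le_one_div_of_le (by positivity)
      (mul_le_mul_of_nonneg_left (by linarith) hπ.le)).trans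
        (one_div_pi_mul_le_normCentralBinom_sq K)
  have hgap : 1 / (π * t) - 1 / (π * (t + 1)) ≤ 1 / (π * t ^ 2) := by
    rw [show 1 / (π * t) - 1 / (π * (t + 1)) = 1 / (π * (t * (t + 1))) by field_simp; ring]
    exact one_div_le_one_div_of_le (by positivity) (by gcongr; nlinarith)
  have hsq : |normCentralBinom K ^ 2 - 1 / (π * t)| ≤ 1 / (π * t ^ 2) := by
    rw [abs_sub_le_iff]
    constructor <;> nlinarith [show 0 < 1 / (π * t ^ 2) by positivity]
  have hπ1 : 1 ≤ √π := one_le_sqrt.2 (by linarith [pi_gt_three])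
  calc |normCentralBinom K - √(1 / (π * t))|
      ≤ |normCentralBinom K ^ 2 - 1 / (π * t)| / √(1 / (π * t)) :=
        abs_sub_sqrt_le (normCentralBinom_pos K).le (by positivity)
    _ ≤ 1 / (π * t ^ 2) / √(1 / (π * t)) := by gcongr
    _ = (√π * (t * √t))⁻¹ := by
        rw [one_div (π * t), sqrt_inv, sqrt_mul hπ.le]
        have := sq_sqrt hπ.le
        have := sq_sqrt ht.le
        field_simp
        nlinarith
    _ ≤ (t * √t)⁻¹ := inv_anti₀ (by positivity) (le_mul_of_one_le_left (by positivity) hπ1)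
    _ = t ^ (-(3 : ℝ) / 2) := (rpow_neg_three_div_two ht.le).symm

lemma two_mul_choose_succ_eq_centralBinom (k : ℕ) :
    2 * (2 * k + 1).choose (k + 1) = centralBinom (k + 1) := by
  rw [centralBinom_eq_two_mul_choose, show 2 * (k + 1) = 2 * k + 1 + 1 by ring,
    choose_succ_succ' (2 * k + 1) k, choose_symm_half]
  ring

lemma inv_two_pow_mul_choose_eq_normCentralBinom {n : ℕ} (hn : 2 ≤ n) :
    (2 : ℝ)⁻¹ ^ n * ((n - 2).choose ((n - 1) / 2) : ℝ) = normCentralBinom ((n - 1) / 2) / 4 := by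
  obtain ⟨k, rfl | rfl⟩ : ∃ k, n = 2 * k + 2 ∨ n = 2 * k + 3 := ⟨(n - 2) / 2, by omega⟩
  · rw [show 2 * k + 2 - 2 = 2 * k by omega, show (2 * k + 2 - 1) / 2 = k by omega,
      ← centralBinom_eq_two_mul_choose, normCentralBinom, pow_add, pow_mul,
      show (2 : ℝ)⁻¹ ^ 2 = 4⁻¹ by norm_num, inv_pow]
    ring
  · rw [show 2 * k + 3 - 2 = 2 * k + 1 by omega, show (2 * k + 3 - 1) / 2 = k + 1 by omega,
      normCentralBinom, ← two_mul_choose_succ_eq_centralBinom, pow_succ, pow_add, pow_mul]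
    push_cast
    rw [show (2 : ℝ)⁻¹ ^ 2 = 4⁻¹ by norm_num, inv_pow]
    ring

lemma cov_one_eq {n : ℕ} (hn : 2 ≤ n) :
    Cov n 1 = (2 : ℝ)⁻¹ ^ n * ((n - 2).choose ((n - 1) / 2) : ℝ) := by
  have hibinom : ibinom (n - 2) (((n : ℤ) - 1) / 2) = (n - 2).choose ((n - 1) / 2) := by
    rw [ibinom, if_pos (by omega)]
    congr 1
    omega
  simp [Cov, hibinom]

/-- **Leave-one-out endpoint (`m = 1`).**
`Cov(n, 1) = 2^{-n}·binom(n-2, ⌊(n-1)/2⌋)`, and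
`Cov(n, 1) = √(1/(8π(n-2))) + O(n^{-3/2})`. -/
theorem cov_loo_endpoint :
    (∀ n : ℕ, 2 ≤ n → Cov n 1 = (2 : ℝ)⁻¹ ^ n * ((n - 2).choose ((n - 1) / 2) : ℝ)) ∧
    ∃ C : ℝ, 0 < C ∧ ∀ n : ℕ, 3 ≤ n →
      |Cov n 1 - Real.sqrt (1 / (8 * π * ((n : ℝ) - 2)))| ≤ C * (n : ℝ) ^ (-(3 : ℝ) / 2) := by
  refine ⟨fun n hn => cov_one_eq hn, 6 ^ (3 / 2 : ℝ) / 4, by positivity, fun n hn => ?_⟩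
  set K := (n - 1) / 2
  set t : ℝ := ((n : ℝ) - 2) / 2 with ht
  have hn3 : (3 : ℝ) ≤ n := by exact_mod_cast hn
  have hKn : (2 * K + 1 : ℝ) ≤ n ∧ (n : ℝ) ≤ 2 * K + 2 := by
    constructor <;> norm_cast <;> omega
  have htarget : √(1 / (8 * π * ((n : ℝ) - 2))) = √(1 / (π * t)) / 4 := by
    rw [show 1 / (8 * π * ((n : ℝ) - 2)) = 1 / (π * t) / 4 ^ 2 by rw [ht]; field_simp; ring,
      sqrt_div' _ (by positivity), sqrt_sq (by norm_num)]
  rw [cov_one_eq (by omega), inv_two_pow_mul_choose_eq_normCentralBinom (by omega), htarget,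
    ← sub_div, abs_div, abs_of_pos (four_pos : (0 : ℝ) < 4)]
  calc |normCentralBinom K - √(1 / (π * t))| / 4 ≤ t ^ (-(3 : ℝ) / 2) / 4 := by
        gcongr
        exact abs_normCentralBinom_sub_sqrt_le (by linarith) (by linarith) (by linarith)
    _ ≤ ((n : ℝ) / 6) ^ (-(3 : ℝ) / 2) / 4 :=
        div_le_div_of_nonneg_right
          (rpow_le_rpow_of_nonpos (by positivity) (by linarith) (by norm_num)) (by norm_num)
    _ = 6 ^ (3 / 2 : ℝ) / 4 * (n : ℝ) ^ (-(3 : ℝ) / 2) := by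
        rw [div_rpow (by positivity) (by norm_num), neg_div, rpow_neg (by norm_num : (0 : ℝ) ≤ 6),
          div_inv_eq_mul]
        ring
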